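/- Let d ≥ 1, Δ > 0, σ > 0, ε ≥ 0 and δ ∈ (0,1) satisfy the analytic-Gaussian condition Φ(Δ/(2σ) − εσ/Δ) − e^ε·Φ(−Δ/(2σ) − εσ/Δ) ≤ δ. Then for all vectors a, b ∈ ℝ^d with ‖a − b‖₂ ≤ Δ and every sign vector v ∈ {−1, 1}^d, the pointwise output probabilities of the coordinate-wise dpsign compressor satisfy ∏_{i=1}^d p(a_i, v_i) ≤ e^ε · ∏_{i=1}^d p(b_i, v_i) + δ, where p(g, 1) = Φ(g/σ) and p(g, −1) = 1 − Φ(g/σ). -/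

import Mathlib

open Real

/-- The cumulative distribution function of the standard normal distribution. -/
noncomputable def stdNormalCDF (x : ℝ) : ℝ :=
  ∫ t in Set.Iic x, (1 / Real.sqrt (2 * Real.pi)) * Real.exp (-(t ^ 2) / 2)

/-- Single-coordinate output probability of the dpsign compressor with noise scale `σ`:
`p σ g 1 = Φ(g/σ)` and `p σ g (−1) = 1 − Φ(g/σ)`. -/
noncomputable def dpsignProb (σ g s : ℝ) : ℝ :=
  if s = 1 then stdNormalCDF (g / σ) else 1 - stdNormalCDF (g / σ)

/-!
With `Φ(x) = P(Z ≤ x)`, the product `∏ p(aᵢ, vᵢ) = ∏ Φ(vᵢ aᵢ / σ)` is the probability that the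
Gaussian vector `N(-α, I)`, `αᵢ = vᵢ aᵢ / σ`, lies in the negative orthant, and sign flips and
scaling give `‖α - β‖ ≤ Δ / σ`. For `N(α, I)` and `N(β, I)` and any event `S`, the Neyman–Pearson
argument bounds `P_α(S) - e^ε P_β(S)` by the same quantity for the likelihood-ratio event
`{e^ε p_β ≤ p_α}`, which is a half-space; projecting onto its normal reduces it to one dimension
and gives `Φ(η/2 - ε/η) - e^ε Φ(-η/2 - ε/η)` with `η = ‖α - β‖`. This is increasing in `η`
(its derivative is the positive density `φ(η/2 - ε/η)`), hence at most its value at `Δ / σ`,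
which is the analytic-Gaussian bound.
-/

open MeasureTheory ProbabilityTheory Set

lemma stdNormalCDF_eq_setIntegral (x : ℝ) :
    stdNormalCDF x = ∫ t in Iic x, gaussianPDFReal 0 1 t := by
  simp [stdNormalCDF, gaussianPDFReal]

lemma measureReal_gaussianReal_Iic (m : ℝ) {σ : ℝ} (hσ : 0 < σ) (t : ℝ) :
    (gaussianReal m (σ ^ 2).toNNReal).real (Iic t) = stdNormalCDF ((t - m) / σ) := by
  have hmap : gaussianReal m (σ ^ 2).toNNReal
      = ((gaussianReal 0 1).map (σ * ·)).map (· + m) := by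
    rw [gaussianReal_map_const_mul, gaussianReal_map_add_const]
    congr 1
    · ring
    · ext; simp [sq_nonneg]
  have hpre : (fun x => σ * x + m) ⁻¹' Iic t = Iic ((t - m) / σ) := by
    ext x
    rw [mem_preimage, mem_Iic, mem_Iic, le_div_iff₀' hσ, le_sub_iff_add_le]
  rw [hmap, Measure.map_map (by fun_prop) (by fun_prop),
    map_measureReal_apply (by fun_prop) measurableSet_Iic, Function.comp_def, hpre,
    measureReal_def, gaussianReal_apply_eq_integral _ one_ne_zero, ENNReal.toReal_ofReal
      (setIntegral_nonneg measurableSet_Iic fun _ _ => gaussianPDFReal_nonneg _ _ _),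
    stdNormalCDF_eq_setIntegral]

lemma stdNormalCDF_eq_measureReal (x : ℝ) : stdNormalCDF x = (gaussianReal 0 1).real (Iic x) := by
  simpa using (measureReal_gaussianReal_Iic 0 one_pos x).symm

lemma stdNormalCDF_neg (x : ℝ) : stdNormalCDF (-x) = 1 - stdNormalCDF x := by
  have := nullSingletonClass_gaussianReal (μ := 0) (v := 1) one_ne_zero
  have hsymm : (gaussianReal 0 1).map (fun x => -x) = gaussianReal 0 1 := by
    simp [gaussianReal_map_neg]
  calc stdNormalCDF (-x) = ((gaussianReal 0 1).map (fun x => -x)).real (Iic (-x)) := by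
        rw [hsymm, stdNormalCDF_eq_measureReal]
    _ = (gaussianReal 0 1).real (Iio x)ᶜ := by
        rw [map_measureReal_apply (by fun_prop) measurableSet_Iic, compl_Iio]
        congr 1; ext; simp
    _ = 1 - stdNormalCDF x := by
        rw [probReal_compl_eq_one_sub measurableSet_Iio, measureReal_congr Iio_ae_eq_Iic,
          stdNormalCDF_eq_measureReal]

lemma hasDerivAt_stdNormalCDF (x : ℝ) : HasDerivAt stdNormalCDF (gaussianPDFReal 0 1 x) x := by
  have hint := integrable_gaussianPDFReal 0 1
  have hftc :
      stdNormalCDF = fun y => stdNormalCDF 0 + ∫ t in (0 : ℝ)..y, gaussianPDFReal 0 1 t := by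
    ext y
    rw [← intervalIntegral.integral_Iic_sub_Iic hint.integrableOn hint.integrableOn,
      stdNormalCDF_eq_setIntegral, stdNormalCDF_eq_setIntegral]
    ring
  have hcont : Continuous (gaussianPDFReal 0 1) := by
    unfold gaussianPDFReal; fun_prop
  rw [hftc]
  exact (intervalIntegral.integral_hasDerivAt_right hint.intervalIntegrable
    (stronglyMeasurable_gaussianPDFReal 0 1).stronglyMeasurableAtFilter
    hcont.continuousAt).const_add _

noncomputable def analyticGaussianDelta (ε s : ℝ) : ℝ :=
  stdNormalCDF (s / 2 - ε / s) - exp ε * stdNormalCDF (-(s / 2) - ε / s)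

lemma exp_mul_gaussianPDFReal_neg (ε : ℝ) {s : ℝ} (hs : s ≠ 0) :
    exp ε * gaussianPDFReal 0 1 (-(s / 2) - ε / s) = gaussianPDFReal 0 1 (s / 2 - ε / s) := by
  simp only [gaussianPDFReal, NNReal.coe_one, mul_left_comm (exp ε), ← exp_add]
  congr 3
  field_simp
  ring

lemma hasDerivAt_analyticGaussianDelta (ε : ℝ) {s : ℝ} (hs : s ≠ 0) :
    HasDerivAt (analyticGaussianDelta ε) (gaussianPDFReal 0 1 (s / 2 - ε / s)) s := by
  have hinv : HasDerivAt (fun s : ℝ => ε / s) (-(ε / s ^ 2)) s := by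
    simpa [div_eq_mul_inv] using (hasDerivAt_inv hs).const_mul ε
  have hplus : HasDerivAt (fun s : ℝ => s / 2 - ε / s) (1 / 2 + ε / s ^ 2) s :=
    (((hasDerivAt_id s).div_const 2).sub hinv).congr_deriv (by ring)
  have hminus : HasDerivAt (fun s : ℝ => -(s / 2) - ε / s) (-(1 / 2) + ε / s ^ 2) s :=
    (((hasDerivAt_id s).div_const 2).neg.sub hinv).congr_deriv (by ring)
  refine (((hasDerivAt_stdNormalCDF _).comp s hplus).sub
    (((hasDerivAt_stdNormalCDF _).comp s hminus).const_mul (exp ε))).congr_deriv ?_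
  rw [← mul_assoc, exp_mul_gaussianPDFReal_neg ε hs]
  ring

lemma strictMonoOn_analyticGaussianDelta (ε : ℝ) :
    StrictMonoOn (analyticGaussianDelta ε) (Ioi 0) := by
  refine strictMonoOn_of_deriv_pos (convex_Ioi 0) (fun s hs => ?_) (fun s hs => ?_)
  · exact (hasDerivAt_analyticGaussianDelta ε (ne_of_gt hs)).continuousAt.continuousWithinAt
  · rw [interior_Ioi] at hs
    rw [(hasDerivAt_analyticGaussianDelta ε (ne_of_gt hs)).deriv]
    exact gaussianPDFReal_pos _ _ _ one_ne_zero

lemma setIntegral_sub_mul_le_superlevel {X : Type*} [MeasurableSpace X] {μ : Measure X}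
    {f g : X → ℝ} (hf : StronglyMeasurable f) (hg : StronglyMeasurable g)
    (hfi : Integrable f μ) (hgi : Integrable g μ) (c : ℝ) {s : Set X} (hs : MeasurableSet s) :
    ∫ x in s, f x ∂μ - c * ∫ x in s, g x ∂μ
      ≤ ∫ x in {x | c * g x ≤ f x}, f x ∂μ - c * ∫ x in {x | c * g x ≤ f x}, g x ∂μ := by
  have hdiff := setIntegral_le_nonneg hs (hf.sub (hg.const_mul c)) (hfi.sub (hgi.const_mul c))
  simp only [Pi.sub_apply, sub_nonneg] at hdiff
  rwa [integral_sub hfi.restrict (hgi.const_mul c).restrict, integral_sub hfi.restrict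
    (hgi.const_mul c).restrict, integral_const_mul, integral_const_mul] at hdiff

variable {ι : Type*} [Fintype ι]

noncomputable def gaussianPi (a : ι → ℝ) : Measure (ι → ℝ) :=
  Measure.pi fun i => gaussianReal (a i) 1

lemma integrable_prod_gaussianPDFReal (a : ι → ℝ) :
    Integrable fun x : ι → ℝ => ∏ i, gaussianPDFReal (a i) 1 (x i) :=
  Integrable.fintype_prod fun i => integrable_gaussianPDFReal (a i) 1

lemma prod_gaussianPDFReal_nonneg (a x : ι → ℝ) : 0 ≤ ∏ i, gaussianPDFReal (a i) 1 (x i) :=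
  Finset.prod_nonneg fun _ _ => gaussianPDFReal_nonneg _ _ _

lemma gaussianPi_eq_withDensity (a : ι → ℝ) :
    gaussianPi a
      = volume.withDensity fun x => ENNReal.ofReal (∏ i, gaussianPDFReal (a i) 1 (x i)) := by
  refine Measure.pi_eq fun s hs => ?_
  rw [withDensity_apply _ (.univ_pi hs), ← ofReal_integral_eq_lintegral_ofReal
      (integrable_prod_gaussianPDFReal a).restrict (ae_of_all _ (prod_gaussianPDFReal_nonneg a)),
    volume_pi, Measure.restrict_pi_pi, integral_fintype_prod_eq_prod,
    ENNReal.ofReal_prod_of_nonneg fun i _ => setIntegral_nonneg (hs i)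
      fun x _ => gaussianPDFReal_nonneg _ _ _]
  exact Finset.prod_congr rfl fun i _ => (gaussianReal_apply_eq_integral _ one_ne_zero _).symm

lemma measureReal_gaussianPi (a : ι → ℝ) (s : Set (ι → ℝ)) :
    (gaussianPi a).real s = ∫ x in s, ∏ i, gaussianPDFReal (a i) 1 (x i) := by
  rw [gaussianPi_eq_withDensity, measureReal_def, withDensity_apply',
    ← ofReal_integral_eq_lintegral_ofReal (integrable_prod_gaussianPDFReal a).restrict
      (ae_of_all _ (prod_gaussianPDFReal_nonneg a)),
    ENNReal.toReal_ofReal (integral_nonneg (prod_gaussianPDFReal_nonneg a))]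

lemma gaussianPi_map_add (a c : ι → ℝ) : (gaussianPi a).map (· + c) = gaussianPi (a + c) := by
  simp only [gaussianPi, Pi.add_apply, ← gaussianReal_map_add_const]
  exact Measure.pi_map_pi fun i => (measurable_add_const (c i)).aemeasurable

lemma measureReal_gaussianPi_Iic (a c : ι → ℝ) :
    (gaussianPi a).real (Iic c) = ∏ i, stdNormalCDF (c i - a i) := by
  rw [gaussianPi, ← pi_univ_Iic, measureReal_def, Measure.pi_pi, ENNReal.toReal_prod]
  refine Finset.prod_congr rfl fun i _ => ?_
  simpa [measureReal_def] using measureReal_gaussianReal_Iic (a i) one_pos (c i)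

lemma measureReal_gaussianPi_halfspace (a w : ι → ℝ) (hw : w ≠ 0) (t : ℝ) :
    (gaussianPi a).real {x | ∑ i, w i * (x i - a i) ≤ t}
      = stdNormalCDF (t / √(∑ i, w i ^ 2)) := by
  set wE : EuclideanSpace ℝ ι := WithLp.toLp 2 w
  set L : StrongDual ℝ (EuclideanSpace ℝ ι) := innerSL ℝ wE
  have hwE : 0 < ‖wE‖ := norm_pos_iff.2 (by simpa [wE] using hw)
  have hnorm : ‖wE‖ = √(∑ i, w i ^ 2) := by simp [wE, EuclideanSpace.norm_eq]
  have hlaw : (stdGaussian (EuclideanSpace ℝ ι)).map L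
      = gaussianReal 0 (‖wE‖ ^ 2).toNNReal := by
    rw [IsGaussian.map_eq_gaussianReal, integral_strongDual_stdGaussian,
      variance_dual_stdGaussian, innerSL_apply_norm]
  have hpre : (· + a) ⁻¹' {x | ∑ i, w i * (x i - a i) ≤ t} = WithLp.toLp 2 ⁻¹' (L ⁻¹' Iic t) := by
    ext x
    simp [L, wE, EuclideanSpace.inner_eq_star_dotProduct, dotProduct, mul_comm]
  have hmap := gaussianPi_map_add (0 : ι → ℝ) a
  rw [zero_add] at hmap
  rw [← hmap, map_measureReal_apply (by fun_prop) (by measurability), hpre, gaussianPi,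
    Pi.zero_def, ← map_measureReal_apply (by fun_prop) (by measurability), map_pi_eq_stdGaussian,
    ← map_measureReal_apply (by fun_prop) measurableSet_Iic, hlaw, hnorm.symm,
    measureReal_gaussianReal_Iic 0 hwE, sub_zero]

lemma prod_gaussianPDFReal (a x : ι → ℝ) :
    ∏ i, gaussianPDFReal (a i) 1 (x i)
      = (√(2 * π))⁻¹ ^ Fintype.card ι * exp (-(∑ i, (x i - a i) ^ 2) / 2) := by
  simp [gaussianPDFReal, Finset.prod_mul_distrib, ← exp_sum, neg_div, ← Finset.sum_div]

lemma exp_mul_prod_gaussianPDFReal_le_iff (ε : ℝ) (a b x : ι → ℝ) :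
    exp ε * ∏ i, gaussianPDFReal (b i) 1 (x i) ≤ ∏ i, gaussianPDFReal (a i) 1 (x i)
      ↔ ∑ i, (b i - a i) * (x i - a i) ≤ (∑ i, (b i - a i) ^ 2) / 2 - ε := by
  rw [prod_gaussianPDFReal, prod_gaussianPDFReal, mul_left_comm,
    mul_le_mul_iff_right₀ (by positivity), ← exp_add, exp_le_exp]
  have hexpand : ∑ i, (x i - b i) ^ 2 - ∑ i, (x i - a i) ^ 2
      = ∑ i, (b i - a i) ^ 2 - 2 * ∑ i, (b i - a i) * (x i - a i) := by
    rw [Finset.mul_sum, ← Finset.sum_sub_distrib, ← Finset.sum_sub_distrib]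
    exact Finset.sum_congr rfl fun i _ => by ring
  constructor <;> intro h <;> linarith

lemma sqrt_sum_sub_sq_pos {a b : ι → ℝ} (hab : a ≠ b) : 0 < √(∑ i, (a i - b i) ^ 2) := by
  obtain ⟨i, hi⟩ := Function.ne_iff.1 hab
  exact sqrt_pos.2 (Finset.sum_pos' (fun j _ => sq_nonneg _)
    ⟨i, Finset.mem_univ i, sq_pos_of_ne_zero (sub_ne_zero.2 hi)⟩)

theorem measureReal_gaussianPi_le (ε : ℝ) {a b : ι → ℝ} (hab : a ≠ b) {s : Set (ι → ℝ)}
    (hs : MeasurableSet s) :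
    (gaussianPi a).real s
      ≤ exp ε * (gaussianPi b).real s + analyticGaussianDelta ε √(∑ i, (b i - a i) ^ 2) := by
  set S := ∑ i, (b i - a i) ^ 2
  set η := √S
  have hη : 0 < η := sqrt_sum_sub_sq_pos hab.symm
  have hS : S = η ^ 2 := (sq_sqrt (by positivity)).symm
  have hw : b - a ≠ 0 := sub_ne_zero.2 hab.symm
  have hA : (gaussianPi a).real {x | ∑ i, (b i - a i) * (x i - a i) ≤ S / 2 - ε}
      = stdNormalCDF (η / 2 - ε / η) := by
    have h := measureReal_gaussianPi_halfspace a (b - a) hw (S / 2 - ε)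
    simp only [Pi.sub_apply] at h
    rw [h]
    change stdNormalCDF ((S / 2 - ε) / η) = _
    rw [hS]
    congr 1
    field_simp
  have hrecenter : ∀ x : ι → ℝ,
      ∑ i, (b i - a i) * (x i - a i) = ∑ i, (b i - a i) * (x i - b i) + S := by
    intro x
    rw [← Finset.sum_add_distrib]
    exact Finset.sum_congr rfl fun i _ => by ring
  have hB : (gaussianPi b).real {x | ∑ i, (b i - a i) * (x i - a i) ≤ S / 2 - ε}
      = stdNormalCDF (-(η / 2) - ε / η) := by
    have h := measureReal_gaussianPi_halfspace b (b - a) hw (S / 2 - ε - S)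
    simp only [Pi.sub_apply] at h
    simp only [hrecenter, ← le_sub_iff_add_le]
    rw [h]
    change stdNormalCDF ((S / 2 - ε - S) / η) = _
    rw [hS]
    congr 1
    field_simp
    ring
  have hnp := setIntegral_sub_mul_le_superlevel
    (by fun_prop) (by fun_prop) (integrable_prod_gaussianPDFReal a)
    (integrable_prod_gaussianPDFReal b) (exp ε) hs
  simp only [← measureReal_gaussianPi, exp_mul_prod_gaussianPDFReal_le_iff] at hnp
  rw [hA, hB] at hnp
  rw [analyticGaussianDelta]
  linarith

theorem prod_stdNormalCDF_le {ε δ η : ℝ} (hε : 0 ≤ ε) (hδ : 0 ≤ δ)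
    (hAG : analyticGaussianDelta ε η ≤ δ) (α β : ι → ℝ) (hαβ : √(∑ i, (α i - β i) ^ 2) ≤ η) :
    ∏ i, stdNormalCDF (α i) ≤ exp ε * ∏ i, stdNormalCDF (β i) + δ := by
  have hprod : ∀ γ : ι → ℝ, ∏ i, stdNormalCDF (γ i) = (gaussianPi (-γ)).real (Iic 0) := by
    intro γ; simp [measureReal_gaussianPi_Iic]
  rcases eq_or_ne α β with rfl | hne
  · rw [hprod]
    nlinarith [measureReal_nonneg (μ := gaussianPi (-α)) (s := Iic 0), one_le_exp hε]
  have hneg : -α ≠ -β := neg_injective.ne hne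
  have hdist : √(∑ i, ((-β) i - (-α) i) ^ 2) = √(∑ i, (α i - β i) ^ 2) := by
    congr 1; exact Finset.sum_congr rfl fun i _ => by simp only [Pi.neg_apply]; ring
  have hmono : analyticGaussianDelta ε √(∑ i, (α i - β i) ^ 2) ≤ analyticGaussianDelta ε η :=
    (strictMonoOn_analyticGaussianDelta ε).monotoneOn (sqrt_sum_sub_sq_pos hne)
      ((sqrt_sum_sub_sq_pos hne).trans_le hαβ) hαβ
  rw [hprod, hprod]
  calc (gaussianPi (-α)).real (Iic 0)
      ≤ exp ε * (gaussianPi (-β)).real (Iic 0) + analyticGaussianDelta ε √(∑ i, (α i - β i) ^ 2) :=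
        hdist ▸ measureReal_gaussianPi_le ε hneg measurableSet_Iic
    _ ≤ exp ε * (gaussianPi (-β)).real (Iic 0) + δ := by linarith

theorem dpsign_pointwise_dp_multidim_general
    (d : ℕ) (Δ σ ε δ : ℝ) (hσ : 0 < σ) (hε : 0 ≤ ε)
    (hδ : δ ∈ Set.Ioo (0 : ℝ) 1)
    (hAG : stdNormalCDF (Δ / (2 * σ) - ε * σ / Δ)
        - Real.exp ε * stdNormalCDF (-(Δ / (2 * σ)) - ε * σ / Δ) ≤ δ) :
    ∀ a b : Fin d → ℝ, Real.sqrt (∑ i, (a i - b i) ^ 2) ≤ Δ →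
      ∀ v : Fin d → ℝ, (∀ i, v i = 1 ∨ v i = -1) →
        ∏ i, dpsignProb σ (a i) (v i)
          ≤ Real.exp ε * ∏ i, dpsignProb σ (b i) (v i) + δ := by
  intro a b hab v hv
  have hsign : ∀ g i, dpsignProb σ g (v i) = stdNormalCDF (v i * g / σ) := by
    intro g i
    rcases hv i with h | h
    · simp [dpsignProb, h]
    · rw [dpsignProb, if_neg (by norm_num [h]), h, neg_one_mul, neg_div, stdNormalCDF_neg]
  have hscale : ∑ i, (v i * a i / σ - v i * b i / σ) ^ 2 = (∑ i, (a i - b i) ^ 2) / σ ^ 2 := by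
    rw [Finset.sum_div]
    refine Finset.sum_congr rfl fun i _ => ?_
    have hv2 : v i ^ 2 = 1 := by rcases hv i with h | h <;> simp [h]
    field_simp
    linear_combination (a i - b i) ^ 2 * hv2
  simp only [hsign]
  refine prod_stdNormalCDF_le (η := Δ / σ) hε hδ.1.le ?_ _ _ ?_
  · rwa [analyticGaussianDelta, div_div_eq_mul_div, div_div, mul_comm σ 2]
  · rw [hscale, sqrt_div' _ (sq_nonneg σ), sqrt_sq hσ.le]
    gcongr

/-- Under the analytic-Gaussian condition, for gradients at `L₂` distance at most `Δ` and any
sign vector `v ∈ {−1,1}^d`, the pointwise output probabilities of the coordinate-wise dpsign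
compressor satisfy the `(ε, δ)`-DP inequality. -/
theorem dpsign_pointwise_dp_multidim
    (d : ℕ) (hd : 1 ≤ d) (Δ σ ε δ : ℝ) (hΔ : 0 < Δ) (hσ : 0 < σ) (hε : 0 ≤ ε)
    (hδ : δ ∈ Set.Ioo (0 : ℝ) 1)
    (hAG : stdNormalCDF (Δ / (2 * σ) - ε * σ / Δ)
        - Real.exp ε * stdNormalCDF (-(Δ / (2 * σ)) - ε * σ / Δ) ≤ δ) :
    ∀ a b : Fin d → ℝ, Real.sqrt (∑ i, (a i - b i) ^ 2) ≤ Δ →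
      ∀ v : Fin d → ℝ, (∀ i, v i = 1 ∨ v i = -1) →
        ∏ i, dpsignProb σ (a i) (v i)
          ≤ Real.exp ε * ∏ i, dpsignProb σ (b i) (v i) + δ :=
  dpsign_pointwise_dp_multidim_general d Δ σ ε δ hσ hε hδ hAG
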